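/- Let k ∈ ℕ, let p ≥ 0 be a real number, and let F : Γ → ℂ satisfy ∑_{σ ∈ Γ} λ_σ^{-2p} |F(σ)|² < ∞. Then ∑_{σ ∈ Γ} λ_σ^{-2p} |(𝔞_k F)(σ)|² converges and ‖𝔞_k F‖_{-p} ≤ (1+k)^p · ‖F‖_{-p}; that is, S_p* is invariant under the annihilation operator 𝔞_k, which is bounded on it with norm at most (1+k)^p. -/

import Mathlib

open scoped BigOperators

/-- `λ_σ = ∏_{k ∈ σ} (k+1)`, with `λ_∅ = 1`. -/
noncomputable def lam (σ : Finset ℕ) : ℝ := ∏ k ∈ σ, ((k : ℝ) + 1)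

/-- The annihilation operator: `(𝔞_k F)(σ) = F(σ ∪ {k})` if `k ∉ σ`, else `0`. -/
def ann (k : ℕ) (F : Finset ℕ → ℂ) : Finset ℕ → ℂ :=
  fun σ => if k ∈ σ then 0 else F (insert k σ)

/-!
Since `λ_{σ ∪ {k}} = (1 + k) λ_σ` for `k ∉ σ`, the `σ`-th term of `‖𝔞_k F‖_{-p}²` is
`(1 + k)^{2p}` times the `(σ ∪ {k})`-th term of `‖F‖_{-p}²`, and `σ ↦ σ ∪ {k}` is injective on
`{σ | k ∉ σ}`; so `‖𝔞_k F‖_{-p}²` is `(1 + k)^{2p}` times a subseries of `‖F‖_{-p}²`.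
-/

theorem Summable.indicator_comp_of_injOn {α β : Type*} {f : α → ℝ} {e : β → α} {s : Set β}
    (hf : Summable f) (he : s.InjOn e) :
    Summable (s.indicator (f ∘ e)) :=
  summable_subtype_iff_indicator.mp (hf.comp_injective he.injective)

theorem tsum_indicator_comp_le_of_injOn {α β : Type*} {f : α → ℝ} {e : β → α} {s : Set β}
    (hf : Summable f) (hf₀ : ∀ a, 0 ≤ f a) (he : s.InjOn e) :
    ∑' b, s.indicator (f ∘ e) b ≤ ∑' a, f a := by
  rw [← tsum_subtype]
  exact tsum_comp_le_tsum_of_inj hf hf₀ he.injective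

theorem lam_pos (σ : Finset ℕ) : 0 < lam σ :=
  Finset.prod_pos fun _ _ => by positivity

theorem lam_insert {k : ℕ} {σ : Finset ℕ} (hk : k ∉ σ) :
    lam (insert k σ) = (1 + k) * lam σ := by
  rw [lam, Finset.prod_insert hk, add_comm, lam]

theorem Finset.injOn_insert_setOf_notMem {α : Type*} [DecidableEq α] (a : α) :
    {s : Finset α | a ∉ s}.InjOn (insert a) := fun s hs t ht hst => by
  rw [← Finset.erase_insert hs, hst, Finset.erase_insert ht]

theorem lam_rpow_mul_norm_ann_sq (k : ℕ) (p : ℝ) (F : Finset ℕ → ℂ) (σ : Finset ℕ) :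
    lam σ ^ (-(2 * p)) * ‖ann k F σ‖ ^ 2 =
      (1 + (k : ℝ)) ^ (2 * p) * {σ : Finset ℕ | k ∉ σ}.indicator
        ((fun τ => lam τ ^ (-(2 * p)) * ‖F τ‖ ^ 2) ∘ insert k) σ := by
  by_cases hk : k ∈ σ
  · simp [ann, hk]
  have hk₀ : (0 : ℝ) < 1 + k := by positivity
  have hcancel : (1 + (k : ℝ)) ^ (2 * p) * (1 + (k : ℝ)) ^ (-(2 * p)) = 1 := by
    rw [Real.rpow_neg hk₀.le, mul_inv_cancel₀ (Real.rpow_pos_of_pos hk₀ _).ne']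
  simp only [ann, hk, if_false, Set.mem_ofPred_eq, not_false_eq_true, Set.indicator_of_mem,
    Function.comp_apply, lam_insert hk, Real.mul_rpow hk₀.le (lam_pos σ).le, ← mul_assoc,
    hcancel, one_mul]

theorem stmt3_general (k : ℕ) (p : ℝ) (F : Finset ℕ → ℂ)
    (hF : Summable (fun σ : Finset ℕ => lam σ ^ (-(2 * p)) * ‖F σ‖ ^ 2)) :
    Summable (fun σ : Finset ℕ => lam σ ^ (-(2 * p)) * ‖ann k F σ‖ ^ 2) ∧
    Real.sqrt (∑' σ : Finset ℕ, lam σ ^ (-(2 * p)) * ‖ann k F σ‖ ^ 2)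
      ≤ (1 + (k : ℝ)) ^ p *
        Real.sqrt (∑' σ : Finset ℕ, lam σ ^ (-(2 * p)) * ‖F σ‖ ^ 2) := by
  have hcoeff : (1 + (k : ℝ)) ^ (2 * p) = ((1 + (k : ℝ)) ^ p) ^ 2 := by
    rw [mul_comm, Real.rpow_mul (by positivity), Real.rpow_two]
  have hsub := hF.indicator_comp_of_injOn (Finset.injOn_insert_setOf_notMem k)
  have hle := tsum_indicator_comp_le_of_injOn hF (fun σ => by have := lam_pos σ; positivity)
    (Finset.injOn_insert_setOf_notMem k)
  simp only [lam_rpow_mul_norm_ann_sq, tsum_mul_left]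
  refine ⟨hsub.mul_left _, ?_⟩
  calc Real.sqrt ((1 + (k : ℝ)) ^ (2 * p) * _)
      ≤ Real.sqrt (((1 + (k : ℝ)) ^ p) ^ 2 * ∑' σ, lam σ ^ (-(2 * p)) * ‖F σ‖ ^ 2) := by
        rw [hcoeff]
        gcongr
    _ = (1 + (k : ℝ)) ^ p * Real.sqrt (∑' σ, lam σ ^ (-(2 * p)) * ‖F σ‖ ^ 2) := by
        rw [Real.sqrt_mul (by positivity), Real.sqrt_sq (by positivity)]

/-- `S_p*` is invariant under `𝔞_k`, with `‖𝔞_k F‖_{-p} ≤ (1+k)^p ‖F‖_{-p}`. -/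
theorem stmt3 (k : ℕ) (p : ℝ) (hp : 0 ≤ p) (F : Finset ℕ → ℂ)
    (hF : Summable (fun σ : Finset ℕ => lam σ ^ (-(2 * p)) * ‖F σ‖ ^ 2)) :
    Summable (fun σ : Finset ℕ => lam σ ^ (-(2 * p)) * ‖ann k F σ‖ ^ 2) ∧
    Real.sqrt (∑' σ : Finset ℕ, lam σ ^ (-(2 * p)) * ‖ann k F σ‖ ^ 2)
      ≤ (1 + (k : ℝ)) ^ p *
        Real.sqrt (∑' σ : Finset ℕ, lam σ ^ (-(2 * p)) * ‖F σ‖ ^ 2) :=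
  stmt3_general k p F hF
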